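/- arXiv:1409.5888 — 4 statements merged into one kernel-verified Lean document; each statement's English description precedes it below -/
import Mathlib

section
/- Fractional Steffensen inequality: Let α ∈ (0,1], 0 ≤ a < b, let f : [a,b] → [0,∞) be decreasing, let g : [a,b] → [0,1], both with α-fractional integrable products, and let ℓ := (α(b−a)/(b^α − a^α))·∫_a^b g(t) t^{α−1} dt. Then ∫_{b−ℓ}^b f(t) t^{α−1} dt ≤ ∫_a^b f(t) g(t) t^{α−1} dt ≤ ∫_a^{a+ℓ} f(t) t^{α−1} dt. -/
/-!
Steffensen's inequality holds for every nonnegative weight `w`: if `f ≥ 0` is decreasing,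
`0 ≤ g ≤ 1` and `∫ₐᵇ g w ≤ ∫ₐᶜ w`, then `∫ₐᵇ f g w ≤ ∫ₐᶜ f w`, since moving the mass of `g w`
from `[c, b]` into `[a, c]` only meets larger values of `f`; `g ↦ 1 - g` gives the lower bound.
For `w t = t ^ (α - 1)` we have `∫ₐᶜ w = (c ^ α - a ^ α) / α`, and `ℓ` is the length over which
the chord of the concave function `x ↦ x ^ α` on `[a, b]` rises by `α ∫ₐᵇ g w`; the graph itself
rises at least that much on `[a, a + ℓ]` and at most that much on `[b - ℓ, b]`.
-/

open Set MeasureTheory intervalIntegral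

section WeightedSteffensen

variable {f g w : ℝ → ℝ} {a b c : ℝ}

lemma integral_mul_le_mul_integral_of_le {φ : ℝ → ℝ} {K : ℝ} (hab : a ≤ b)
    (hφ : ∀ t ∈ Icc a b, 0 ≤ φ t) (hf : ∀ t ∈ Icc a b, f t ≤ K)
    (hfφ : IntervalIntegrable (fun t => f t * φ t) volume a b)
    (hφi : IntervalIntegrable φ volume a b) :
    ∫ t in a..b, f t * φ t ≤ K * ∫ t in a..b, φ t := by
  rw [← intervalIntegral.integral_const_mul]
  exact integral_mono_on hab hfφ (hφi.const_mul K)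
    fun t ht => mul_le_mul_of_nonneg_right (hf t ht) (hφ t ht)

lemma mul_integral_le_integral_mul_of_le {φ : ℝ → ℝ} {K : ℝ} (hab : a ≤ b)
    (hφ : ∀ t ∈ Icc a b, 0 ≤ φ t) (hf : ∀ t ∈ Icc a b, K ≤ f t)
    (hfφ : IntervalIntegrable (fun t => f t * φ t) volume a b)
    (hφi : IntervalIntegrable φ volume a b) :
    K * ∫ t in a..b, φ t ≤ ∫ t in a..b, f t * φ t := by
  rw [← intervalIntegral.integral_const_mul]
  exact integral_mono_on hab (hφi.const_mul K) hfφ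
    fun t ht => mul_le_mul_of_nonneg_right (hf t ht) (hφ t ht)

lemma IntervalIntegrable.mono_Icc {F : ℝ → ℝ} (hF : IntervalIntegrable F volume a b)
    (hab : a ≤ b) {u v : ℝ} (hu : u ∈ Icc a b) (hv : v ∈ Icc a b) :
    IntervalIntegrable F volume u v :=
  hF.mono_set <| uIcc_subset_uIcc (by rwa [uIcc_of_le hab]) (by rwa [uIcc_of_le hab])

/-- Weighted Steffensen inequality, upper bound. -/
theorem integral_mul_mul_le_integral_of_antitoneOn (hac : a ≤ c) (hcb : c ≤ b)
    (hf0 : 0 ≤ f c) (hf : AntitoneOn f (Icc a b)) (hg : ∀ t ∈ Icc a b, g t ∈ Icc (0 : ℝ) 1)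
    (hw : ∀ t ∈ Icc a b, 0 ≤ w t) (hwi : IntervalIntegrable w volume a b)
    (hfw : IntervalIntegrable (fun t => f t * w t) volume a b)
    (hgw : IntervalIntegrable (fun t => g t * w t) volume a b)
    (hfgw : IntervalIntegrable (fun t => f t * g t * w t) volume a b)
    (hc : ∫ t in a..b, g t * w t ≤ ∫ t in a..c, w t) :
    ∫ t in a..b, f t * g t * w t ≤ ∫ t in a..c, f t * w t := by
  have hab := hac.trans hcb
  have ha : a ∈ Icc a b := left_mem_Icc.2 hab
  have hb : b ∈ Icc a b := right_mem_Icc.2 hab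
  have hcm : c ∈ Icc a b := ⟨hac, hcb⟩
  have hAC : Icc a c ⊆ Icc a b := Icc_subset_Icc_right hcb
  have hCB : Icc c b ⊆ Icc a b := Icc_subset_Icc_left hac
  have hgw' : IntervalIntegrable (fun t => (1 - g t) * w t) volume a c := by
    simpa only [sub_mul, one_mul] using (hwi.sub hgw).mono_Icc hab ha hcm
  have hfgw' : IntervalIntegrable (fun t => f t * ((1 - g t) * w t)) volume a c := by
    simpa only [sub_mul, mul_sub, one_mul, mul_assoc] using (hfw.sub hfgw).mono_Icc hab ha hcm
  simp only [mul_assoc] at hfgw ⊢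
  have hmass : ∫ t in c..b, g t * w t ≤ ∫ t in a..c, (1 - g t) * w t := by
    rw [← integral_add_adjacent_intervals (hgw.mono_Icc hab ha hcm)
      (hgw.mono_Icc hab hcm hb)] at hc
    simp only [sub_mul, one_mul]
    rw [integral_sub (hwi.mono_Icc hab ha hcm) (hgw.mono_Icc hab ha hcm)]
    linarith
  calc ∫ t in a..b, f t * (g t * w t)
      = (∫ t in a..c, f t * (g t * w t)) + ∫ t in c..b, f t * (g t * w t) :=
        (integral_add_adjacent_intervals (hfgw.mono_Icc hab ha hcm)
          (hfgw.mono_Icc hab hcm hb)).symm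
    _ ≤ (∫ t in a..c, f t * (g t * w t)) + f c * ∫ t in c..b, g t * w t := by
        gcongr
        exact integral_mul_le_mul_integral_of_le hcb
          (fun t ht => mul_nonneg (hg t (hCB ht)).1 (hw t (hCB ht)))
          (fun t ht => hf hcm (hCB ht) ht.1) (hfgw.mono_Icc hab hcm hb)
          (hgw.mono_Icc hab hcm hb)
    _ ≤ (∫ t in a..c, f t * (g t * w t)) + f c * ∫ t in a..c, (1 - g t) * w t := by
        gcongr
    _ ≤ (∫ t in a..c, f t * (g t * w t)) + ∫ t in a..c, f t * ((1 - g t) * w t) := by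
        gcongr
        exact mul_integral_le_integral_mul_of_le hac
          (fun t ht => mul_nonneg (sub_nonneg.2 (hg t (hAC ht)).2) (hw t (hAC ht)))
          (fun t ht => hf (hAC ht) hcm ht.2) hfgw' hgw'
    _ = ∫ t in a..c, f t * w t := by
        rw [← integral_add (hfgw.mono_Icc hab ha hcm) hfgw']
        congr 1 with t
        ring

/-- Weighted Steffensen inequality, lower bound. -/
theorem integral_le_integral_mul_mul_of_antitoneOn (hac : a ≤ c) (hcb : c ≤ b)
    (hf0 : 0 ≤ f c) (hf : AntitoneOn f (Icc a b)) (hg : ∀ t ∈ Icc a b, g t ∈ Icc (0 : ℝ) 1)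
    (hw : ∀ t ∈ Icc a b, 0 ≤ w t) (hwi : IntervalIntegrable w volume a b)
    (hfw : IntervalIntegrable (fun t => f t * w t) volume a b)
    (hgw : IntervalIntegrable (fun t => g t * w t) volume a b)
    (hfgw : IntervalIntegrable (fun t => f t * g t * w t) volume a b)
    (hc : ∫ t in c..b, w t ≤ ∫ t in a..b, g t * w t) :
    ∫ t in c..b, f t * w t ≤ ∫ t in a..b, f t * g t * w t := by
  have hab := hac.trans hcb
  have ha : a ∈ Icc a b := left_mem_Icc.2 hab
  have hb : b ∈ Icc a b := right_mem_Icc.2 hab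
  have hcm : c ∈ Icc a b := ⟨hac, hcb⟩
  have hgw' : IntervalIntegrable (fun t => (1 - g t) * w t) volume a b := by
    simpa only [sub_mul, one_mul] using hwi.sub hgw
  have hfgw' : IntervalIntegrable (fun t => f t * (1 - g t) * w t) volume a b := by
    simpa only [mul_sub, sub_mul, mul_one] using hfw.sub hfgw
  have key := integral_mul_mul_le_integral_of_antitoneOn hac hcb hf0 hf
    (fun t ht => ⟨sub_nonneg.2 (hg t ht).2, sub_le_self _ (hg t ht).1⟩) hw hwi hfw hgw' hfgw' ?_
  · simp only [mul_sub, sub_mul, mul_one] at key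
    rw [integral_sub hfw hfgw, ← integral_add_adjacent_intervals (hfw.mono_Icc hab ha hcm)
      (hfw.mono_Icc hab hcm hb)] at key
    linarith
  · simp only [sub_mul, one_mul]
    rw [integral_sub hwi hgw, ← integral_add_adjacent_intervals (hwi.mono_Icc hab ha hcm)
      (hwi.mono_Icc hab hcm hb)]
    linarith

end WeightedSteffensen

lemma div_mul_le_self_of_le {x P J : ℝ} (hx : 0 ≤ x) (hP : 0 < P) (hJ : J ≤ P) :
    x / P * J ≤ x :=
  calc x / P * J ≤ x / P * P := by gcongr
    _ = x := div_mul_cancel₀ x hP.ne'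

section ConcaveChord

variable {φ : ℝ → ℝ} {s : Set ℝ} {a b x J : ℝ}

lemma ConcaveOn.div_mul_sub_le_sub (hφ : ConcaveOn ℝ s φ) (ha : a ∈ s) (hb : b ∈ s)
    (hab : a < b) (hax : a ≤ x) (hxb : x ≤ b) :
    (x - a) / (b - a) * (φ b - φ a) ≤ φ x - φ a := by
  have hba : 0 < b - a := sub_pos.2 hab
  have h := hφ.2 ha hb (div_nonneg (sub_nonneg.2 hxb) hba.le)
    (div_nonneg (sub_nonneg.2 hax) hba.le) (by field_simp; ring)
  have hx : (b - x) / (b - a) * a + (x - a) / (b - a) * b = x := by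
    field_simp; ring
  rw [smul_eq_mul, smul_eq_mul, smul_eq_mul, smul_eq_mul, hx] at h
  have : (x - a) / (b - a) * (φ b - φ a) =
      (b - x) / (b - a) * φ a + (x - a) / (b - a) * φ b - φ a := by
    field_simp; ring
  linarith

/-- `(b - a) / (φ b - φ a) * J` is the length over which the chord of `φ` on `[a, b]` rises
by `J`. -/
lemma ConcaveOn.le_sub_apply_of_chord (hφ : ConcaveOn ℝ s φ) (ha : a ∈ s) (hb : b ∈ s)
    (hab : a < b) (hφab : φ a < φ b) (hJ0 : 0 ≤ J) (hJ : J ≤ φ b - φ a) :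
    J ≤ φ (a + (b - a) / (φ b - φ a) * J) - φ a := by
  have hba := sub_pos.2 hab
  have hP := sub_pos.2 hφab
  have hℓ0 : 0 ≤ (b - a) / (φ b - φ a) * J := by positivity
  have hℓ := div_mul_le_self_of_le hba.le hP hJ
  convert hφ.div_mul_sub_le_sub ha hb hab (x := a + (b - a) / (φ b - φ a) * J)
    (by linarith) (by linarith) using 1
  field_simp
  ring

lemma ConcaveOn.apply_sub_le_of_chord (hφ : ConcaveOn ℝ s φ) (ha : a ∈ s) (hb : b ∈ s)
    (hab : a < b) (hφab : φ a < φ b) (hJ0 : 0 ≤ J) (hJ : J ≤ φ b - φ a) :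
    φ b - φ (b - (b - a) / (φ b - φ a) * J) ≤ J := by
  have hba := sub_pos.2 hab
  have hP := sub_pos.2 hφab
  have hℓ0 : 0 ≤ (b - a) / (φ b - φ a) * J := by positivity
  have hℓ := div_mul_le_self_of_le hba.le hP hJ
  have h := hφ.div_mul_sub_le_sub ha hb hab (x := b - (b - a) / (φ b - φ a) * J)
    (by linarith) (by linarith)
  have : (b - (b - a) / (φ b - φ a) * J - a) / (b - a) * (φ b - φ a) = φ b - φ a - J := by
    field_simp
    ring
  linarith

end ConcaveChord

lemma integral_rpow_sub_one {α : ℝ} (hα : 0 < α) (a b : ℝ) :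
    ∫ t in a..b, t ^ (α - 1) = (b ^ α - a ^ α) / α := by
  rw [integral_rpow (Or.inl (by linarith))]
  norm_num

/-- Fractional Steffensen inequality. -/
theorem fractional_steffensen (α a b : ℝ) (hα : 0 < α ∧ α ≤ 1) (ha : 0 ≤ a) (hab : a < b)
    (f g : ℝ → ℝ)
    (hf0 : ∀ t ∈ Icc a b, 0 ≤ f t) (hfdec : AntitoneOn f (Icc a b))
    (hg : ∀ t ∈ Icc a b, g t ∈ Icc (0:ℝ) 1)
    (hfi : IntervalIntegrable (fun t => f t * t ^ (α - 1)) volume a b)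
    (hgi : IntervalIntegrable (fun t => g t * t ^ (α - 1)) volume a b)
    (hfgi : IntervalIntegrable (fun t => f t * g t * t ^ (α - 1)) volume a b)
    (ℓ : ℝ) (hℓ : ℓ = (α * (b - a) / (b ^ α - a ^ α)) * ∫ t in a..b, g t * t ^ (α - 1)) :
    (∫ t in (b - ℓ)..b, f t * t ^ (α - 1)) ≤ (∫ t in a..b, f t * g t * t ^ (α - 1)) ∧
    (∫ t in a..b, f t * g t * t ^ (α - 1)) ≤ ∫ t in a..(a + ℓ), f t * t ^ (α - 1) := by
  obtain ⟨hα0, hα1⟩ := hα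
  have hw : ∀ t ∈ Icc a b, 0 ≤ t ^ (α - 1) := fun t ht => Real.rpow_nonneg (ha.trans ht.1) _
  have hwi : IntervalIntegrable (fun t : ℝ => t ^ (α - 1)) volume a b :=
    intervalIntegrable_rpow' (by linarith)
  have hpow : a ^ α < b ^ α := Real.rpow_lt_rpow ha hab hα0
  set I := ∫ t in a..b, g t * t ^ (α - 1)
  have hI0 : 0 ≤ α * I :=
    mul_nonneg hα0.le (integral_nonneg hab.le fun t ht => mul_nonneg (hg t ht).1 (hw t ht))
  have hIle : α * I ≤ b ^ α - a ^ α := by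
    rw [← le_div_iff₀' hα0, ← integral_rpow_sub_one hα0]
    exact integral_mono_on hab.le hgi hwi fun t ht => mul_le_of_le_one_left (hw t ht) (hg t ht).2
  replace hℓ : ℓ = (b - a) / (b ^ α - a ^ α) * (α * I) := by rw [hℓ]; ring
  have hℓ0 : 0 ≤ ℓ := hℓ ▸ mul_nonneg (div_nonneg (sub_pos.2 hab).le (sub_pos.2 hpow).le) hI0
  have hℓb : ℓ ≤ b - a := hℓ ▸ div_mul_le_self_of_le (sub_pos.2 hab).le (sub_pos.2 hpow) hIle
  have hconc := Real.concaveOn_rpow hα0.le hα1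
  have hb : b ∈ Ici (0 : ℝ) := mem_Ici.2 (ha.trans hab.le)
  constructor
  · refine integral_le_integral_mul_mul_of_antitoneOn (by linarith) (by linarith)
      (hf0 _ ⟨by linarith, by linarith⟩) hfdec hg hw hwi hfi hgi hfgi ?_
    rw [integral_rpow_sub_one hα0, div_le_iff₀' hα0, hℓ]
    exact hconc.apply_sub_le_of_chord (mem_Ici.2 ha) hb hab hpow hI0 hIle
  · refine integral_mul_mul_le_integral_of_antitoneOn (by linarith) (by linarith)
      (hf0 _ ⟨by linarith, by linarith⟩) hfdec hg hw hwi hfi hgi hfgi ?_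
    rw [integral_rpow_sub_one hα0, le_div_iff₀' hα0, hℓ]
    exact hconc.le_sub_apply_of_chord (mem_Ici.2 ha) hb hab hpow hI0 hIle
end

section
/- Let α ∈ (0,1], 0 < a < b, and let f be (n+2) times α-fractional differentiable with D_α^{n+1} f continuous. Define the Taylor remainder R_{n,f}(t,s) := f(s) − Σ_{k=0}^{n} (D_α^k f(t)/k!)·((s^α − t^α)/α)^k. Then ∫_a^b (D_α^{n+1} f(s)/(n+1)!)·((t^α − s^α)/α)^{n+1} s^{α−1} ds = ∫_a^t R_{n,f}(a,s) s^{α−1} ds + ∫_t^b R_{n,f}(b,s) s^{α−1} ds for all t ∈ [a,b]. -/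
/-!
Split `∫_a^b` at `t` and treat each piece `[c, t]`, `c ∈ {a, b}`, separately. Let `F` be an
α-primitive of `f`, so that `D_α^{k+1} F = D_α^k f` on `(0, ∞)`. Differentiating `R_{n+1,F}(c, ·)`
gives `∫_c^t R_{n,f}(c,s) s^{α-1} ds = R_{n+1,F}(c,t)`, and the α-Taylor formula with integral
remainder for `F` at order `n + 1` turns this into the integral of
`D_α^{n+1} f(s)/(n+1)! ((t^α - s^α)/α)^{n+1} s^{α-1}`. That Taylor formula is the fundamental
theorem of calculus in the centre `u` of the Taylor sum, whose derivative telescopes.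
-/

open Set MeasureTheory intervalIntegral

noncomputable def condD (α : ℝ) (f : ℝ → ℝ) : ℝ → ℝ :=
  fun t => t ^ (1 - α) * deriv f t

/-- α-fractional Taylor remainder `R_{n,f}(t,s)`. -/
noncomputable def taylorRem (α : ℝ) (f : ℝ → ℝ) (n : ℕ) (t s : ℝ) : ℝ :=
  f s - ∑ k ∈ Finset.range (n+1),
    ((condD α)^[k] f t / (k.factorial : ℝ)) * ((s ^ α - t ^ α) / α) ^ k

section

variable {α : ℝ}

lemma intervalIntegrable_of_continuousOn_Ioi {g : ℝ → ℝ} (hg : ContinuousOn g (Ioi 0))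
    {c t : ℝ} (hc : 0 < c) (ht : 0 < t) : IntervalIntegrable g volume c t :=
  (hg.mono (ordConnected_Ioi.uIcc_subset hc ht)).intervalIntegrable

lemma exists_hasDerivAt_of_continuousOn_Ioi {g : ℝ → ℝ} (hg : ContinuousOn g (Ioi 0)) :
    ∃ G : ℝ → ℝ, ∀ x ∈ Ioi (0:ℝ), HasDerivAt G (g x) x :=
  ⟨fun x => ∫ s in (1:ℝ)..x, g s, fun x hx =>
    integral_hasDerivAt_right (intervalIntegrable_of_continuousOn_Ioi hg one_pos hx)
      (hg.stronglyMeasurableAtFilter isOpen_Ioi x hx) (hg.continuousAt (isOpen_Ioi.mem_nhds hx))⟩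

lemma continuousOn_rpow_const_Ioi (β : ℝ) : ContinuousOn (fun u : ℝ => u ^ β) (Ioi 0) :=
  continuousOn_id.rpow_const fun _ hx => Or.inl (ne_of_gt hx)

lemma hasDerivAt_rpow_sub_div (hα : α ≠ 0) (c : ℝ) {s : ℝ} (hs : 0 < s) :
    HasDerivAt (fun u => (u ^ α - c) / α) (s ^ (α - 1)) s := by
  refine (((Real.hasDerivAt_rpow_const (Or.inl hs.ne')).sub_const c).div_const α).congr_deriv ?_
  field_simp

lemma hasDerivAt_sub_rpow_div (hα : α ≠ 0) (c : ℝ) {s : ℝ} (hs : 0 < s) :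
    HasDerivAt (fun u => (c - u ^ α) / α) (-s ^ (α - 1)) s := by
  simpa only [← neg_div, neg_sub] using (hasDerivAt_rpow_sub_div hα c hs).fun_neg

lemma hasDerivAt_iterate_condD {f : ℝ → ℝ} {k : ℕ} {s : ℝ} (hs : 0 < s)
    (hd : DifferentiableAt ℝ ((condD α)^[k] f) s) :
    HasDerivAt ((condD α)^[k] f) (s ^ (α - 1) * (condD α)^[k+1] f s) s := by
  refine hd.hasDerivAt.congr_deriv ?_
  rw [Function.iterate_succ_apply', condD, ← mul_assoc, ← Real.rpow_add hs]
  simp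

lemma continuousOn_iterate_condD {f : ℝ → ℝ} {k : ℕ}
    (hd : ∀ x ∈ Ioi (0:ℝ), DifferentiableAt ℝ ((condD α)^[k] f) x) :
    ContinuousOn ((condD α)^[k] f) (Ioi 0) :=
  fun x hx => (hd x hx).continuousAt.continuousWithinAt

lemma continuousOn_iterate_condD_mul_pow_mul_rpow {f : ℝ → ℝ} {m j : ℕ} (d t : ℝ)
    (hd : ∀ x ∈ Ioi (0:ℝ), DifferentiableAt ℝ ((condD α)^[m] f) x) :
    ContinuousOn (fun u => (condD α)^[m] f u / d * ((t ^ α - u ^ α) / α) ^ j * u ^ (α - 1))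
      (Ioi 0) :=
  (((continuousOn_iterate_condD hd).div_const d).mul
    (((continuousOn_const.sub (continuousOn_rpow_const_Ioi α)).div_const α).pow j)).mul
    (continuousOn_rpow_const_Ioi (α - 1))

lemma iterate_condD_eqOn {g h : ℝ → ℝ} (hgh : EqOn g h (Ioi 0)) (k : ℕ) :
    EqOn ((condD α)^[k] g) ((condD α)^[k] h) (Ioi 0) := by
  induction k with
  | zero => exact hgh
  | succ k ih =>
    intro x hx
    rw [Function.iterate_succ_apply', Function.iterate_succ_apply', condD, condD,
      (ih.eventuallyEq_of_mem (isOpen_Ioi.mem_nhds hx)).deriv_eq]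

lemma iterate_succ_condD_eqOn_of_hasDerivAt {f F : ℝ → ℝ}
    (hF : ∀ x ∈ Ioi (0:ℝ), HasDerivAt F (f x * x ^ (α - 1)) x) (k : ℕ) :
    EqOn ((condD α)^[k+1] F) ((condD α)^[k] f) (Ioi 0) := by
  have hDF : EqOn (condD α F) f (Ioi 0) := fun x hx => by
    rw [condD, (hF x hx).deriv, mul_left_comm, ← Real.rpow_add hx]
    simp
  simpa only [Function.iterate_succ_apply] using iterate_condD_eqOn hDF k

lemma hasDerivAt_taylorSum_center (hα : α ≠ 0) {f : ℝ → ℝ} (t : ℝ) {s : ℝ} (hs : 0 < s) :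
    ∀ n : ℕ, (∀ k ≤ n, DifferentiableAt ℝ ((condD α)^[k] f) s) →
    HasDerivAt (fun u => ∑ k ∈ Finset.range (n+1),
        (condD α)^[k] f u / (k.factorial : ℝ) * ((t ^ α - u ^ α) / α) ^ k)
      ((condD α)^[n+1] f s / (n.factorial : ℝ) * ((t ^ α - s ^ α) / α) ^ n * s ^ (α - 1)) s
  | 0, hd => by
    simpa [mul_comm] using hasDerivAt_iterate_condD hs (hd 0 le_rfl)
  | n+1, hd => by
    simp_rw [Finset.sum_range_succ _ (n+1)]
    have hlow := hasDerivAt_taylorSum_center hα t hs n fun k hk => hd k (by omega)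
    have htop := ((hasDerivAt_iterate_condD hs (hd (n+1) le_rfl)).div_const
      ((n+1).factorial : ℝ)).mul ((hasDerivAt_sub_rpow_div hα (t ^ α) hs).fun_pow (n+1))
    refine (hlow.add htop).congr_deriv ?_
    simp only [Nat.factorial_succ, Nat.cast_mul, Nat.add_sub_cancel]
    field_simp
    push_cast
    ring

theorem taylorRem_eq_integral (hα : α ≠ 0) {f : ℝ → ℝ} {n : ℕ} {c t : ℝ} (hc : 0 < c) (ht : 0 < t)
    (hdiff : ∀ k ≤ n + 1, ∀ x ∈ Ioi (0:ℝ), DifferentiableAt ℝ ((condD α)^[k] f) x) :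
    taylorRem α f n c t = ∫ u in c..t,
      (condD α)^[n+1] f u / (n.factorial : ℝ) * ((t ^ α - u ^ α) / α) ^ n * u ^ (α - 1) := by
  rw [integral_eq_sub_of_hasDerivAt (fun u hu => hasDerivAt_taylorSum_center hα t
      (ordConnected_Ioi.uIcc_subset hc ht hu) n fun k hk => hdiff k (by omega) u
      (ordConnected_Ioi.uIcc_subset hc ht hu))
    (intervalIntegrable_of_continuousOn_Ioi
      (continuousOn_iterate_condD_mul_pow_mul_rpow _ t (hdiff (n+1) le_rfl)) hc ht)]
  simp [taylorRem, Finset.sum_range_succ']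

lemma hasDerivAt_taylorSum_eval (hα : α ≠ 0) (a : ℕ → ℝ) (c : ℝ) (n : ℕ) {s : ℝ} (hs : 0 < s) :
    HasDerivAt (fun u => ∑ k ∈ Finset.range (n+1), a k / (k.factorial : ℝ) * ((u ^ α - c) / α) ^ k)
      (∑ k ∈ Finset.range n, a (k+1) / (k.factorial : ℝ) * ((s ^ α - c) / α) ^ k * s ^ (α - 1))
      s := by
  simp_rw [Finset.sum_range_succ' _ n, pow_zero]
  have hterms := HasDerivAt.fun_sum (u := Finset.range n) fun k _ =>
    ((hasDerivAt_rpow_sub_div hα c hs).fun_pow (k+1)).const_mul (a (k+1) / ((k+1).factorial : ℝ))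
  refine (hterms.add_const _).congr_deriv ?_
  refine Finset.sum_congr rfl fun k _ => ?_
  simp only [Nat.factorial_succ, Nat.cast_mul, Nat.add_sub_cancel]
  field_simp

theorem integral_taylorRem_mul_rpow (hα : α ≠ 0) {f F : ℝ → ℝ} {n : ℕ} {c t : ℝ}
    (hc : 0 < c) (ht : 0 < t) (hf : ContinuousOn f (Ioi 0))
    (hF : ∀ x ∈ Ioi (0:ℝ), HasDerivAt F (f x * x ^ (α - 1)) x) :
    ∫ s in c..t, taylorRem α f n c s * s ^ (α - 1) = taylorRem α F (n+1) c t := by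
  have hFf (k : ℕ) : (condD α)^[k+1] F c = (condD α)^[k] f c :=
    iterate_succ_condD_eqOn_of_hasDerivAt hF k hc
  have hderiv : ∀ s ∈ Ioi (0:ℝ),
      HasDerivAt (taylorRem α F (n+1) c) (taylorRem α f n c s * s ^ (α - 1)) s := fun s hs => by
    have hpoly := hasDerivAt_taylorSum_eval hα (fun k => (condD α)^[k] F c) (c ^ α) (n+1) hs
    refine ((hF s hs).sub hpoly).congr_deriv ?_
    simp only [hFf, taylorRem, sub_mul, Finset.sum_mul]
  have hcont : ContinuousOn (fun s => taylorRem α f n c s * s ^ (α - 1)) (Ioi 0) :=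
    (hf.sub (continuousOn_finsetSum _ fun k _ => continuousOn_const.mul
      ((((continuousOn_rpow_const_Ioi α).sub continuousOn_const).div_const α).pow k))).mul
      (continuousOn_rpow_const_Ioi (α - 1))
  rw [integral_eq_sub_of_hasDerivAt (fun s hs => hderiv s (ordConnected_Ioi.uIcc_subset hc ht hs))
    (intervalIntegrable_of_continuousOn_Ioi hcont hc ht)]
  simp [taylorRem, Finset.sum_range_succ']

theorem integral_iterate_condD_mul_pow_eq_integral_taylorRem (hα : α ≠ 0) {f : ℝ → ℝ} {n : ℕ}
    {c t : ℝ} (hc : 0 < c) (ht : 0 < t)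
    (hdiff : ∀ k ≤ n + 1, ∀ x ∈ Ioi (0:ℝ), DifferentiableAt ℝ ((condD α)^[k] f) x) :
    ∫ s in c..t, (condD α)^[n+1] f s / ((n+1).factorial : ℝ) *
        ((t ^ α - s ^ α) / α) ^ (n+1) * s ^ (α - 1)
      = ∫ s in c..t, taylorRem α f n c s * s ^ (α - 1) := by
  have hf : ContinuousOn f (Ioi 0) := continuousOn_iterate_condD (k := 0) (hdiff 0 (by omega))
  obtain ⟨F, hF⟩ := exists_hasDerivAt_of_continuousOn_Ioi
    (hf.mul (continuousOn_rpow_const_Ioi (α - 1)))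
  have hFf := iterate_succ_condD_eqOn_of_hasDerivAt hF
  have hFdiff : ∀ k ≤ n + 2, ∀ x ∈ Ioi (0:ℝ), DifferentiableAt ℝ ((condD α)^[k] F) x
    | 0, _, x, hx => (hF x hx).differentiableAt
    | k + 1, hk, x, hx => (hdiff k (by omega) x hx).congr_of_eventuallyEq
        ((hFf k).eventuallyEq_of_mem (isOpen_Ioi.mem_nhds hx))
  rw [integral_taylorRem_mul_rpow hα hc ht hf hF, taylorRem_eq_integral hα hc ht hFdiff]
  refine integral_congr fun s hs => ?_
  simp only [hFf (n+1) (ordConnected_Ioi.uIcc_subset hc ht hs)]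

end

theorem taylor_remainder_identity_general (α a b : ℝ) (hα : 0 < α ∧ α ≤ 1)
    (ha : 0 < a) (n : ℕ) (f : ℝ → ℝ)
    (hdiff : ∀ k ≤ n + 1, ∀ x ∈ Ioi (0:ℝ), DifferentiableAt ℝ ((condD α)^[k] f) x)
    (t : ℝ) (ht : t ∈ Icc a b) :
    (∫ s in a..b, ((condD α)^[n+1] f s / ((n+1).factorial : ℝ)) *
        ((t ^ α - s ^ α) / α) ^ (n+1) * s ^ (α - 1)) =
      (∫ s in a..t, taylorRem α f n a s * s ^ (α - 1)) +
      ∫ s in t..b, taylorRem α f n b s * s ^ (α - 1) := by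
  have hα0 : α ≠ 0 := hα.1.ne'
  have htpos : 0 < t := ha.trans_le ht.1
  have hb : 0 < b := htpos.trans_le ht.2
  have hcont := continuousOn_iterate_condD_mul_pow_mul_rpow ((n+1).factorial : ℝ) t
    (j := n + 1) (hdiff (n+1) le_rfl)
  rw [← integral_add_adjacent_intervals (intervalIntegrable_of_continuousOn_Ioi hcont ha htpos)
      (intervalIntegrable_of_continuousOn_Ioi hcont htpos hb),
    integral_iterate_condD_mul_pow_eq_integral_taylorRem hα0 ha htpos hdiff, integral_symm b t,
    integral_iterate_condD_mul_pow_eq_integral_taylorRem hα0 hb htpos hdiff, ← integral_symm]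

/-- Identity for the α-fractional Taylor remainder. -/
theorem taylor_remainder_identity (α a b : ℝ) (hα : 0 < α ∧ α ≤ 1)
    (ha : 0 < a) (hab : a < b) (n : ℕ) (f : ℝ → ℝ)
    (hdiff : ∀ k ≤ n + 1, ∀ x ∈ Ioi (0:ℝ), DifferentiableAt ℝ ((condD α)^[k] f) x)
    (hcont : ContinuousOn ((condD α)^[n+1] f) (Icc a b))
    (t : ℝ) (ht : t ∈ Icc a b) :
    (∫ s in a..b, ((condD α)^[n+1] f s / ((n+1).factorial : ℝ)) *
        ((t ^ α - s ^ α) / α) ^ (n+1) * s ^ (α - 1)) =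
      (∫ s in a..t, taylorRem α f n a s * s ^ (α - 1)) +
      ∫ s in t..b, taylorRem α f n b s * s ^ (α - 1) :=
  taylor_remainder_identity_general α a b hα ha n f hdiff t ht
end

section
/- Let α ∈ (0,1], 0 < a < b, and f : [a,b] → ℝ be α-fractional differentiable with m ≤ D_α f(t) ≤ M on [a,b] for reals m < M. Set ℓ := (α(b−a)/((b^α − a^α)(M−m)))·(f(b) − f(a) − m(b^α − a^α)/α). Then (m/2)((b^α − a^α)/α)^2 + ((M−m)/2)((b^α − (b−ℓ)^α)/α)^2 ≤ ∫_a^b f(t) t^{α−1} dt − f(a)(b^α − a^α)/α ≤ (M/2)((b^α − a^α)/α)^2 + ((m−M)/2)((b^α − (a+ℓ)^α)/α)^2. -/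
/-!
With `u t = t ^ α / α` we have `u' t = t ^ (α - 1)`, so `D_α f = f' / u'` and
`t ^ (α - 1) dt = du`: the claim is the first-order Steffensen bound for `f` as a function of `u`.
The bounds on `D_α f` say that `G = (f - f a - m (u - u a)) / (M - m)` (`normalizedExcess`) and
`u - G` are monotone, which traps `G` between `max 0 (λ - (u b - u))` and `min λ (u - u a)`,
where `λ = G b`. Integrating against `du` gives `λ² / 2 ≤ ∫ G du ≤ λ (u b - u a) - λ² / 2`, and
`f` is affine in `G` and `u`. The step `ℓ` is the fraction `λ / (u b - u a)` of `b - a`, and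
concavity of `t ↦ t ^ α` bounds the increments of `u` over a step `ℓ` at the two ends of `[a, b]`
by `λ` and `u b - u a - λ`.
-/

open Set MeasureTheory intervalIntegral

open Filter Asymptotics in
theorem hasDerivAt_max_zero_sq_div_two (x : ℝ) :
    HasDerivAt (fun y : ℝ => max 0 y ^ 2 / 2) (max 0 x) x := by
  rcases lt_trichotomy x 0 with hx | rfl | hx
  · rw [max_eq_left hx.le]
    refine (hasDerivAt_const x (0 : ℝ)).congr_of_eventuallyEq ?_
    filter_upwards [Iio_mem_nhds hx] with y hy
    simp [max_eq_left (le_of_lt (mem_Iio.1 hy))]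
  · rw [max_self, hasDerivAt_iff_isLittleO_nhds_zero]
    simp only [zero_add, max_self, ne_eq, OfNat.ofNat_ne_zero, not_false_eq_true, zero_pow,
      zero_div, sub_zero, smul_zero]
    refine IsBigO.trans_isLittleO ?_ (isLittleO_pow_id one_lt_two)
    refine IsBigO.of_bound 1 (Eventually.of_forall fun h => ?_)
    rcases le_total h 0 with hh | hh
    · simp [max_eq_left hh, sq_nonneg]
    · simp [max_eq_right hh]
      nlinarith [sq_nonneg h]
  · rw [max_eq_right hx.le]
    refine (((hasDerivAt_pow 2 x).div_const 2).congr_deriv (by ring)).congr_of_eventuallyEq ?_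
    filter_upwards [Ioi_mem_nhds hx] with y hy
    simp [max_eq_right (le_of_lt (mem_Ioi.1 hy))]

theorem monotoneOn_Icc_of_hasDerivAt_nonneg {g g' : ℝ → ℝ} {a b : ℝ}
    (hg : ∀ t ∈ Icc a b, HasDerivAt g (g' t) t) (hg' : ∀ t ∈ Icc a b, 0 ≤ g' t) :
    MonotoneOn g (Icc a b) :=
  monotoneOn_of_hasDerivWithinAt_nonneg (convex_Icc a b)
    (fun t ht => (hg t ht).continuousAt.continuousWithinAt)
    (fun t ht => (hg t (interior_subset ht)).hasDerivWithinAt)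
    fun t ht => hg' t (interior_subset ht)

theorem ConcaveOn.mul_sub_le_map_add_mul_sub {s : Set ℝ} {φ : ℝ → ℝ} (hφ : ConcaveOn ℝ s φ)
    {a b θ : ℝ} (ha : a ∈ s) (hb : b ∈ s) (hθ₀ : 0 ≤ θ) (hθ₁ : θ ≤ 1) :
    θ * (φ b - φ a) ≤ φ (a + θ * (b - a)) - φ a := by
  have h := hφ.2 ha hb (sub_nonneg.2 hθ₁) hθ₀ (sub_add_cancel 1 θ)
  simp only [smul_eq_mul] at h
  rw [show a + θ * (b - a) = (1 - θ) * a + θ * b by ring]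
  linarith

theorem ConcaveOn.map_sub_map_sub_mul_sub_le {s : Set ℝ} {φ : ℝ → ℝ} (hφ : ConcaveOn ℝ s φ)
    {a b θ : ℝ} (ha : a ∈ s) (hb : b ∈ s) (hθ₀ : 0 ≤ θ) (hθ₁ : θ ≤ 1) :
    φ b - φ (b - θ * (b - a)) ≤ θ * (φ b - φ a) := by
  have h := hφ.mul_sub_le_map_add_mul_sub ha hb (sub_nonneg.2 hθ₁) (sub_le_self 1 hθ₀)
  rw [show a + (1 - θ) * (b - a) = b - θ * (b - a) by ring] at h
  linarith

section WeightedSteffensen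

variable {u w f f' : ℝ → ℝ} {a b m M : ℝ}

theorem intervalIntegrable_sub_mul (hab : a ≤ b) (hu : ∀ t ∈ Icc a b, HasDerivAt u (w t) t)
    (hw : ContinuousOn w (Icc a b)) (c : ℝ) :
    IntervalIntegrable (fun t => (u t - c) * w t) volume a b :=
  (((HasDerivAt.continuousOn hu).sub continuousOn_const).mul hw).intervalIntegrable_of_Icc hab

theorem intervalIntegrable_max_zero_sub_mul (hab : a ≤ b)
    (hu : ∀ t ∈ Icc a b, HasDerivAt u (w t) t) (hw : ContinuousOn w (Icc a b)) (c : ℝ) :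
    IntervalIntegrable (fun t => max 0 (u t - c) * w t) volume a b :=
  ((ContinuousOn.sup continuousOn_const ((HasDerivAt.continuousOn hu).sub continuousOn_const)).mul
    hw).intervalIntegrable_of_Icc hab

theorem integral_sub_mul_deriv (hab : a ≤ b) (hu : ∀ t ∈ Icc a b, HasDerivAt u (w t) t)
    (hw : ContinuousOn w (Icc a b)) :
    ∫ t in a..b, (u t - u a) * w t = (u b - u a) ^ 2 / 2 := by
  rw [integral_eq_sub_of_hasDerivAt (f := fun t => (u t - u a) ^ 2 / 2) (fun t ht => ?_)
    (intervalIntegrable_sub_mul hab hu hw (u a))]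
  · ring
  · rw [uIcc_of_le hab] at ht
    exact ((((hu t ht).sub_const (u a)).pow 2).div_const 2).congr_deriv (by ring)

theorem integral_max_zero_sub_mul_deriv (hab : a ≤ b) (hu : ∀ t ∈ Icc a b, HasDerivAt u (w t) t)
    (hw : ContinuousOn w (Icc a b)) {c : ℝ} (hc : u a ≤ c) :
    ∫ t in a..b, max 0 (u t - c) * w t = max 0 (u b - c) ^ 2 / 2 := by
  rw [integral_eq_sub_of_hasDerivAt (f := fun t => max 0 (u t - c) ^ 2 / 2) (fun t ht => ?_)
    (intervalIntegrable_max_zero_sub_mul hab hu hw c), max_eq_left (sub_nonpos.2 hc)]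
  · ring
  · rw [uIcc_of_le hab] at ht
    exact (hasDerivAt_max_zero_sq_div_two _).comp t ((hu t ht).sub_const c)

theorem sq_div_two_le_integral_mul_deriv (hab : a ≤ b) (hu : ∀ t ∈ Icc a b, HasDerivAt u (w t) t)
    (hw : ContinuousOn w (Icc a b)) (hw₀ : ∀ t ∈ Icc a b, 0 ≤ w t) {G : ℝ → ℝ}
    (hGc : ContinuousOn G (Icc a b)) (hG : MonotoneOn G (Icc a b))
    (huG : MonotoneOn (u - G) (Icc a b)) (hGa : G a = 0) :
    G b ^ 2 / 2 ≤ ∫ t in a..b, G t * w t := by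
  have ha : a ∈ Icc a b := left_mem_Icc.2 hab
  have hb : b ∈ Icc a b := right_mem_Icc.2 hab
  have hGb : 0 ≤ G b := hGa ▸ hG ha hb hab
  have hGb' : u a - G a ≤ u b - G b := huG ha hb hab
  calc G b ^ 2 / 2 = max 0 (u b - (u b - G b)) ^ 2 / 2 := by rw [sub_sub_cancel, max_eq_right hGb]
    _ = ∫ t in a..b, max 0 (u t - (u b - G b)) * w t :=
        (integral_max_zero_sub_mul_deriv hab hu hw (by linarith)).symm
    _ ≤ ∫ t in a..b, G t * w t := by
      refine integral_mono_on hab (intervalIntegrable_max_zero_sub_mul hab hu hw _)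
        ((hGc.mul hw).intervalIntegrable_of_Icc hab) fun t ht => ?_
      have hGt : u t - G t ≤ u b - G b := huG ht hb ht.2
      exact mul_le_mul_of_nonneg_right (max_le (hGa ▸ hG ha ht ht.1) (by linarith)) (hw₀ t ht)

theorem integral_mul_deriv_le_mul_sub_sq_div_two (hab : a ≤ b)
    (hu : ∀ t ∈ Icc a b, HasDerivAt u (w t) t) (hw : ContinuousOn w (Icc a b))
    (hw₀ : ∀ t ∈ Icc a b, 0 ≤ w t) {G : ℝ → ℝ}
    (hGc : ContinuousOn G (Icc a b)) (hG : MonotoneOn G (Icc a b))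
    (huG : MonotoneOn (u - G) (Icc a b)) (hGa : G a = 0) :
    ∫ t in a..b, G t * w t ≤ G b * (u b - u a) - G b ^ 2 / 2 := by
  have ha : a ∈ Icc a b := left_mem_Icc.2 hab
  have hb : b ∈ Icc a b := right_mem_Icc.2 hab
  have hGb : 0 ≤ G b := hGa ▸ hG ha hb hab
  have hGb' : u a - G a ≤ u b - G b := huG ha hb hab
  have hlin := intervalIntegrable_sub_mul hab hu hw (u a)
  calc ∫ t in a..b, G t * w t
      ≤ ∫ t in a..b, ((u t - u a) * w t - max 0 (u t - (u a + G b)) * w t) := by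
        refine integral_mono_on hab ((hGc.mul hw).intervalIntegrable_of_Icc hab)
          (hlin.sub (intervalIntegrable_max_zero_sub_mul hab hu hw _)) fun t ht => ?_
        have hGt : u a - G a ≤ u t - G t := huG ha ht ht.1
        have hmax : max 0 (u t - (u a + G b)) ≤ u t - u a - G t :=
          max_le (by linarith) (by linarith [hG ht hb ht.2])
        rw [← sub_mul]
        exact mul_le_mul_of_nonneg_right (by linarith) (hw₀ t ht)
    _ = (u b - u a) ^ 2 / 2 - max 0 (u b - (u a + G b)) ^ 2 / 2 := by
        rw [integral_sub hlin (intervalIntegrable_max_zero_sub_mul hab hu hw _),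
          integral_sub_mul_deriv hab hu hw,
          integral_max_zero_sub_mul_deriv hab hu hw (by linarith)]
    _ = G b * (u b - u a) - G b ^ 2 / 2 := by
        rw [max_eq_right (by linarith)]
        ring

noncomputable def normalizedExcess (u f : ℝ → ℝ) (a m M t : ℝ) : ℝ :=
  (f t - f a - m * (u t - u a)) / (M - m)

theorem normalizedExcess_self : normalizedExcess u f a m M a = 0 := by
  simp [normalizedExcess]

theorem hasDerivAt_normalizedExcess {t u' f'' : ℝ} (hu : HasDerivAt u u' t)
    (hf : HasDerivAt f f'' t) :
    HasDerivAt (normalizedExcess u f a m M) ((f'' - m * u') / (M - m)) t :=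
  ((hf.sub_const (f a)).sub ((hu.sub_const (u a)).const_mul m)).div_const (M - m)

theorem monotoneOn_normalizedExcess (hmM : m < M) (hu : ∀ t ∈ Icc a b, HasDerivAt u (w t) t)
    (hf : ∀ t ∈ Icc a b, HasDerivAt f (f' t) t) (hbd : ∀ t ∈ Icc a b, m * w t ≤ f' t) :
    MonotoneOn (normalizedExcess u f a m M) (Icc a b) :=
  monotoneOn_Icc_of_hasDerivAt_nonneg (fun t ht => hasDerivAt_normalizedExcess (hu t ht) (hf t ht))
    fun t ht => div_nonneg (sub_nonneg.2 (hbd t ht)) (sub_pos.2 hmM).le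

theorem monotoneOn_sub_normalizedExcess (hmM : m < M) (hu : ∀ t ∈ Icc a b, HasDerivAt u (w t) t)
    (hf : ∀ t ∈ Icc a b, HasDerivAt f (f' t) t) (hbd : ∀ t ∈ Icc a b, f' t ≤ M * w t) :
    MonotoneOn (u - normalizedExcess u f a m M) (Icc a b) := by
  refine monotoneOn_Icc_of_hasDerivAt_nonneg
    (fun t ht => (hu t ht).sub (hasDerivAt_normalizedExcess (hu t ht) (hf t ht))) fun t ht => ?_
  rw [sub_nonneg, div_le_iff₀ (sub_pos.2 hmM)]
  linarith [hbd t ht]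

theorem normalizedExcess_mem_Icc (hab : a ≤ b) (hmM : m < M)
    (hu : ∀ t ∈ Icc a b, HasDerivAt u (w t) t) (hf : ∀ t ∈ Icc a b, HasDerivAt f (f' t) t)
    (hbd : ∀ t ∈ Icc a b, m * w t ≤ f' t ∧ f' t ≤ M * w t) :
    normalizedExcess u f a m M b ∈ Icc 0 (u b - u a) := by
  have ha : a ∈ Icc a b := left_mem_Icc.2 hab
  have hb : b ∈ Icc a b := right_mem_Icc.2 hab
  have hG := monotoneOn_normalizedExcess hmM hu hf (fun t ht => (hbd t ht).1) ha hb hab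
  have huG := monotoneOn_sub_normalizedExcess hmM hu hf (fun t ht => (hbd t ht).2) ha hb hab
  simp only [Pi.sub_apply, normalizedExcess_self] at hG huG
  exact ⟨hG, by linarith⟩

theorem integral_mul_deriv_sub_eq (hab : a ≤ b) (hmM : m ≠ M)
    (hu : ∀ t ∈ Icc a b, HasDerivAt u (w t) t) (hw : ContinuousOn w (Icc a b))
    (hf : ContinuousOn f (Icc a b)) :
    (∫ t in a..b, f t * w t) - f a * (u b - u a) =
      m / 2 * (u b - u a) ^ 2 + (M - m) * ∫ t in a..b, normalizedExcess u f a m M t * w t := by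
  have hG : ContinuousOn (normalizedExcess u f a m M) (Icc a b) :=
    ((hf.sub continuousOn_const).sub (continuousOn_const.mul
      ((HasDerivAt.continuousOn hu).sub continuousOn_const))).div_const _
  have hdecomp : ∀ t, f t * w t = f a * w t + m * ((u t - u a) * w t)
      + (M - m) * (normalizedExcess u f a m M t * w t) := by
    intro t
    simp only [normalizedExcess]
    field_simp [sub_ne_zero.2 hmM.symm]
    ring
  have hw_int : IntervalIntegrable w volume a b := hw.intervalIntegrable_of_Icc hab
  have hlin_int := intervalIntegrable_sub_mul hab hu hw (u a)
  have hG_int : IntervalIntegrable (fun t => normalizedExcess u f a m M t * w t) volume a b :=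
    (hG.mul hw).intervalIntegrable_of_Icc hab
  simp_rw [hdecomp]
  rw [intervalIntegral.integral_add ((hw_int.const_mul _).add (hlin_int.const_mul _))
      (hG_int.const_mul _),
    intervalIntegral.integral_add (hw_int.const_mul _) (hlin_int.const_mul _),
    intervalIntegral.integral_const_mul, intervalIntegral.integral_const_mul,
    intervalIntegral.integral_const_mul, integral_sub_mul_deriv hab hu hw,
    integral_eq_sub_of_hasDerivAt (fun t ht => hu t (uIcc_of_le hab ▸ ht)) hw_int]
  ring

theorem steffensen_bounds_weighted (hab : a ≤ b) (hmM : m < M)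
    (hu : ∀ t ∈ Icc a b, HasDerivAt u (w t) t) (hw : ContinuousOn w (Icc a b))
    (hf : ∀ t ∈ Icc a b, HasDerivAt f (f' t) t)
    (hbd : ∀ t ∈ Icc a b, m * w t ≤ f' t ∧ f' t ≤ M * w t) :
    m / 2 * (u b - u a) ^ 2 + (M - m) / 2 * normalizedExcess u f a m M b ^ 2 ≤
        (∫ t in a..b, f t * w t) - f a * (u b - u a) ∧
      (∫ t in a..b, f t * w t) - f a * (u b - u a) ≤
        M / 2 * (u b - u a) ^ 2 - (M - m) / 2 * (u b - u a - normalizedExcess u f a m M b) ^ 2 := by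
  have hMm : 0 < M - m := sub_pos.2 hmM
  have hw₀ : ∀ t ∈ Icc a b, 0 ≤ w t := fun t ht =>
    nonneg_of_mul_nonneg_right (by linarith [hbd t ht]) hMm
  have hGc : ContinuousOn (normalizedExcess u f a m M) (Icc a b) :=
    HasDerivAt.continuousOn fun t ht => hasDerivAt_normalizedExcess (hu t ht) (hf t ht)
  have hG := monotoneOn_normalizedExcess hmM hu hf (fun t ht => (hbd t ht).1)
  have huG := monotoneOn_sub_normalizedExcess hmM hu hf (fun t ht => (hbd t ht).2)
  have hlow := sq_div_two_le_integral_mul_deriv hab hu hw hw₀ hGc hG huG normalizedExcess_self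
  have hup :=
    integral_mul_deriv_le_mul_sub_sq_div_two hab hu hw hw₀ hGc hG huG normalizedExcess_self
  rw [integral_mul_deriv_sub_eq hab hmM.ne hu hw (HasDerivAt.continuousOn hf)]
  constructor
  · linarith [mul_le_mul_of_nonneg_left hlow hMm.le]
  · linarith [mul_le_mul_of_nonneg_left hup hMm.le]

end WeightedSteffensen

theorem hasDerivAt_rpow_div_self {α t : ℝ} (hα : α ≠ 0) (ht : 0 < t) :
    HasDerivAt (fun x => x ^ α / α) (t ^ (α - 1)) t :=
  ((Real.hasDerivAt_rpow_const (Or.inl ht.ne')).div_const α).congr_deriv (by field_simp)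

theorem condD_mul_rpow_sub_one (α : ℝ) (f : ℝ → ℝ) {t : ℝ} (ht : 0 < t) :
    condD α f t * t ^ (α - 1) = deriv f t := by
  rw [condD, mul_right_comm, ← Real.rpow_add ht]
  simp

theorem deriv_mem_Icc_of_condD_mem_Icc {α m M t : ℝ} {f : ℝ → ℝ} (ht : 0 < t)
    (h : condD α f t ∈ Icc m M) : deriv f t ∈ Icc (m * t ^ (α - 1)) (M * t ^ (α - 1)) := by
  have hw₀ : 0 ≤ t ^ (α - 1) := (Real.rpow_pos_of_pos ht _).le
  rw [← condD_mul_rpow_sub_one α f ht]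
  exact ⟨mul_le_mul_of_nonneg_right h.1 hw₀, mul_le_mul_of_nonneg_right h.2 hw₀⟩

theorem rpow_sub_rpow_sub_div_mem_Icc {α a b θ : ℝ} (hα₀ : 0 < α) (hα₁ : α ≤ 1) (ha : 0 ≤ a)
    (hab : a ≤ b) (hθ₀ : 0 ≤ θ) (hθ₁ : θ ≤ 1) :
    (b ^ α - (b - θ * (b - a)) ^ α) / α ∈ Icc 0 (θ * ((b ^ α - a ^ α) / α)) := by
  have hstep : θ * (b - a) ≤ b - a := mul_le_of_le_one_left (sub_nonneg.2 hab) hθ₁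
  have hconc := (Real.concaveOn_rpow hα₀.le hα₁).map_sub_map_sub_mul_sub_le (mem_Ici.2 ha)
    (mem_Ici.2 (ha.trans hab)) hθ₀ hθ₁
  refine ⟨div_nonneg (sub_nonneg.2 (Real.rpow_le_rpow (by linarith) (by nlinarith) hα₀.le))
    hα₀.le, ?_⟩
  rw [← mul_div_assoc, div_le_div_iff_of_pos_right hα₀]
  exact hconc

theorem rpow_sub_rpow_add_div_mem_Icc {α a b θ : ℝ} (hα₀ : 0 < α) (hα₁ : α ≤ 1) (ha : 0 ≤ a)
    (hab : a ≤ b) (hθ₀ : 0 ≤ θ) (hθ₁ : θ ≤ 1) :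
    (b ^ α - (a + θ * (b - a)) ^ α) / α ∈ Icc 0 ((1 - θ) * ((b ^ α - a ^ α) / α)) := by
  have hstep : θ * (b - a) ≤ b - a := mul_le_of_le_one_left (sub_nonneg.2 hab) hθ₁
  have hconc := (Real.concaveOn_rpow hα₀.le hα₁).mul_sub_le_map_add_mul_sub (mem_Ici.2 ha)
    (mem_Ici.2 (ha.trans hab)) hθ₀ hθ₁
  refine ⟨div_nonneg (sub_nonneg.2 (Real.rpow_le_rpow (by nlinarith) (by linarith) hα₀.le))
    hα₀.le, ?_⟩
  rw [← mul_div_assoc, div_le_div_iff_of_pos_right hα₀]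
  linarith

theorem steffensen_bounds_first_order_general (α a b m M : ℝ) (hα : 0 < α ∧ α ≤ 1)
    (ha : 0 < a) (hab : a < b) (hmM : m < M) (f : ℝ → ℝ)
    (hdiff : ∀ x ∈ Icc a b, DifferentiableAt ℝ f x)
    (hbd : ∀ t ∈ Icc a b, m ≤ condD α f t ∧ condD α f t ≤ M)
    (ℓ : ℝ) (hℓ : ℓ = (α * (b - a) / ((b ^ α - a ^ α) * (M - m))) *
      (f b - f a - m * (b ^ α - a ^ α) / α)) :
    (m / 2) * ((b ^ α - a ^ α) / α) ^ 2
      + ((M - m) / 2) * ((b ^ α - (b - ℓ) ^ α) / α) ^ 2 ≤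
        (∫ t in a..b, f t * t ^ (α - 1)) - f a * (b ^ α - a ^ α) / α ∧
    (∫ t in a..b, f t * t ^ (α - 1)) - f a * (b ^ α - a ^ α) / α ≤
      (M / 2) * ((b ^ α - a ^ α) / α) ^ 2
        + ((m - M) / 2) * ((b ^ α - (a + ℓ) ^ α) / α) ^ 2 := by
  obtain ⟨hα₀, hα₁⟩ := hα
  have hpos : ∀ t ∈ Icc a b, 0 < t := fun t ht => ha.trans_le ht.1
  have hu : ∀ t ∈ Icc a b, HasDerivAt (fun x => x ^ α / α) (t ^ (α - 1)) t :=
    fun t ht => hasDerivAt_rpow_div_self hα₀.ne' (hpos t ht)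
  have hw : ContinuousOn (fun t => t ^ (α - 1)) (Icc a b) :=
    continuousOn_id.rpow_const fun t ht => Or.inl (hpos t ht).ne'
  have hf : ∀ t ∈ Icc a b, HasDerivAt f (deriv f t) t := fun t ht => (hdiff t ht).hasDerivAt
  have hbd' : ∀ t ∈ Icc a b, m * t ^ (α - 1) ≤ deriv f t ∧ deriv f t ≤ M * t ^ (α - 1) :=
    fun t ht => deriv_mem_Icc_of_condD_mem_Icc (hpos t ht) (hbd t ht)
  obtain ⟨hE₀, hEK⟩ := normalizedExcess_mem_Icc hab.le hmM hu hf hbd'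
  obtain ⟨hlow, hup⟩ := steffensen_bounds_weighted hab.le hmM hu hw hf hbd'
  set E := normalizedExcess (fun x => x ^ α / α) f a m M b with hE
  set K := (b ^ α - a ^ α) / α with hK
  have hKpos : 0 < K := div_pos (sub_pos.2 (Real.rpow_lt_rpow ha.le hab hα₀)) hα₀
  have hK' : b ^ α / α - a ^ α / α = K := by ring
  simp only [hK'] at hEK hlow hup
  have hℓE : ℓ = E / K * (b - a) := by
    rw [hℓ, hE, hK, normalizedExcess]
    field_simp
  have hθ₀ : 0 ≤ E / K := div_nonneg hE₀ hKpos.le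
  have hθ₁ : E / K ≤ 1 := (div_le_one hKpos).2 hEK
  have hX := rpow_sub_rpow_sub_div_mem_Icc hα₀ hα₁ ha.le hab.le hθ₀ hθ₁
  have hY := rpow_sub_rpow_add_div_mem_Icc hα₀ hα₁ ha.le hab.le hθ₀ hθ₁
  rw [← hℓE, div_mul_cancel₀ E hKpos.ne'] at hX
  rw [← hℓE, sub_mul, one_mul, div_mul_cancel₀ E hKpos.ne'] at hY
  have hMm : 0 ≤ M - m := (sub_pos.2 hmM).le
  rw [mul_div_assoc]
  constructor
  · linarith [mul_le_mul_of_nonneg_left (pow_le_pow_left₀ hX.1 hX.2 2) hMm]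
  · linarith [mul_le_mul_of_nonneg_left (pow_le_pow_left₀ hY.1 hY.2 2) hMm]

/-- Bounds on the α-fractional integral when `m ≤ D_α f ≤ M`. -/
theorem steffensen_bounds_first_order (α a b m M : ℝ) (hα : 0 < α ∧ α ≤ 1)
    (ha : 0 < a) (hab : a < b) (hmM : m < M) (f : ℝ → ℝ)
    (hdiff : ∀ x ∈ Icc a b, DifferentiableAt ℝ f x)
    (hbd : ∀ t ∈ Icc a b, m ≤ condD α f t ∧ condD α f t ≤ M)
    (hint : IntervalIntegrable (fun t => f t * t ^ (α - 1)) volume a b)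
    (ℓ : ℝ) (hℓ : ℓ = (α * (b - a) / ((b ^ α - a ^ α) * (M - m))) *
      (f b - f a - m * (b ^ α - a ^ α) / α)) :
    (m / 2) * ((b ^ α - a ^ α) / α) ^ 2
      + ((M - m) / 2) * ((b ^ α - (b - ℓ) ^ α) / α) ^ 2 ≤
        (∫ t in a..b, f t * t ^ (α - 1)) - f a * (b ^ α - a ^ α) / α ∧
    (∫ t in a..b, f t * t ^ (α - 1)) - f a * (b ^ α - a ^ α) / α ≤
      (M / 2) * ((b ^ α - a ^ α) / α) ^ 2
        + ((m - M) / 2) * ((b ^ α - (a + ℓ) ^ α) / α) ^ 2 :=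
  steffensen_bounds_first_order_general α a b m M hα ha hab hmM f hdiff hbd ℓ hℓ
end

section
/- Hermite–Hadamard inequality II: Let α ∈ (0,1], 0 < a < b, and f : [a,b] → ℝ be α-fractional differentiable with D_α f increasing on [a,b]. Then (α/(b^α − a^α))·∫_a^b f(t) t^{α−1} dt ≤ (f(a) + f(b))/2. If D_α f is decreasing, the inequality is reversed. -/
/-!
The substitution `u = t ^ α` turns the fractional integral into `α⁻¹ ∫_{a^α}^{b^α} g` with
`g u = f (u ^ α⁻¹)`, and the chain rule gives `g' u = α⁻¹ * D_α f (u ^ α⁻¹)`. Since `u ↦ u ^ α⁻¹`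
is increasing, a monotone `D_α f` makes `g` convex, and the classical Hermite–Hadamard bound
(a convex function lies below its chord) yields the inequality. The decreasing case follows by
applying this to `-f`.
-/

open Set MeasureTheory intervalIntegral

theorem ConvexOn.le_chord {g : ℝ → ℝ} {A B u : ℝ} (hg : ConvexOn ℝ (Icc A B) g) (hAB : A < B)
    (hu : u ∈ Icc A B) : g u ≤ ((B - u) * g A + (u - A) * g B) / (B - A) := by
  have hBA : 0 < B - A := sub_pos.2 hAB
  have hcomb : ((B - u) / (B - A)) • A + ((u - A) / (B - A)) • B = u := by
    simp only [smul_eq_mul]; field_simp; ring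
  have h := hg.2 (left_mem_Icc.2 hAB.le) (right_mem_Icc.2 hAB.le)
    (div_nonneg (sub_nonneg.2 hu.2) hBA.le) (div_nonneg (sub_nonneg.2 hu.1) hBA.le)
    (by field_simp; ring)
  rw [hcomb, smul_eq_mul, smul_eq_mul] at h
  exact h.trans_eq (by field_simp)

theorem integral_chord (A B c d : ℝ) (hAB : A ≠ B) :
    ∫ u in A..B, ((B - u) * c + (u - A) * d) / (B - A) = (B - A) * ((c + d) / 2) := by
  have hBA : B - A ≠ 0 := sub_ne_zero.2 hAB.symm
  have haffine : (fun u => ((B - u) * c + (u - A) * d) / (B - A))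
      = fun u => (B * c - A * d) / (B - A) + (d - c) / (B - A) * u := by
    funext u; field_simp; ring
  rw [haffine, intervalIntegral.integral_add intervalIntegrable_const
    (intervalIntegrable_id.const_mul _), intervalIntegral.integral_const,
    intervalIntegral.integral_const_mul, integral_id, smul_eq_mul]
  field_simp
  ring

theorem ConvexOn.integral_le_mul_add_div_two {g : ℝ → ℝ} {A B : ℝ}
    (hg : ConvexOn ℝ (Icc A B) g) (hgi : IntervalIntegrable g volume A B) (hAB : A ≤ B) :
    ∫ u in A..B, g u ≤ (B - A) * ((g A + g B) / 2) := by
  rcases hAB.eq_or_lt with rfl | hAB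
  · simp
  calc ∫ u in A..B, g u ≤ ∫ u in A..B, ((B - u) * g A + (u - A) * g B) / (B - A) :=
        integral_mono_on hAB.le hgi (by apply Continuous.intervalIntegrable; fun_prop)
          fun u hu => hg.le_chord hAB hu
    _ = (B - A) * ((g A + g B) / 2) := integral_chord A B _ _ hAB.ne

theorem convexOn_Icc_of_hasDerivAt_of_monotoneOn {g g' : ℝ → ℝ} {A B : ℝ}
    (hg : ∀ u ∈ Icc A B, HasDerivAt g (g' u) u) (hg' : MonotoneOn g' (Icc A B)) :
    ConvexOn ℝ (Icc A B) g := by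
  have hderiv : EqOn g' (deriv g) (interior (Icc A B)) := fun u hu =>
    ((hg u (interior_subset hu)).deriv).symm
  exact ((hg'.mono interior_subset).congr hderiv).convexOn_of_deriv (convex_Icc A B)
    (fun u hu => (hg u hu).continuousAt.continuousWithinAt)
    (fun u hu => (hg u (interior_subset hu)).differentiableAt.differentiableWithinAt)

theorem rpow_inv_mem_Icc_of_mem_Icc_rpow {α a b u : ℝ} (hα : 0 < α) (ha : 0 ≤ a) (hb : 0 ≤ b)
    (hu : u ∈ Icc (a ^ α) (b ^ α)) : u ^ α⁻¹ ∈ Icc a b := by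
  have hu0 : 0 ≤ u := (Real.rpow_nonneg ha α).trans hu.1
  exact ⟨(Real.le_rpow_inv_iff_of_pos ha hu0 hα).2 hu.1,
    (Real.rpow_inv_le_iff_of_pos hu0 hb hα).2 hu.2⟩

theorem hasDerivAt_comp_rpow_inv {α u : ℝ} {f : ℝ → ℝ} (hα : α ≠ 0) (hu : 0 < u)
    (hf : DifferentiableAt ℝ f (u ^ α⁻¹)) :
    HasDerivAt (fun u => f (u ^ α⁻¹)) (α⁻¹ * condD α f (u ^ α⁻¹)) u := by
  have hpow : (u ^ α⁻¹) ^ (1 - α) = u ^ (α⁻¹ - 1) := by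
    rw [← Real.rpow_mul hu.le]; congr 1; field_simp
  refine (hf.hasDerivAt.comp u
    (Real.hasDerivAt_rpow_const (p := α⁻¹) (Or.inl hu.ne'))).congr_deriv ?_
  simp only [condD, hpow]; ring

theorem integral_mul_rpow_sub_one_eq {α a b : ℝ} {f : ℝ → ℝ} (hα : α ≠ 0)
    (hpos : ∀ t ∈ uIcc a b, 0 < t) (hf : ContinuousOn f (uIcc a b)) :
    α * ∫ t in a..b, f t * t ^ (α - 1) = ∫ u in a ^ α..b ^ α, f (u ^ α⁻¹) := by
  have hmaps : MapsTo (· ^ α⁻¹) ((· ^ α) '' uIcc a b) (uIcc a b) := by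
    rintro _ ⟨t, ht, rfl⟩
    simpa only [Real.rpow_rpow_inv (hpos t ht).le hα] using ht
  have hcont : ContinuousOn (fun u => f (u ^ α⁻¹)) ((· ^ α) '' uIcc a b) := by
    refine hf.comp (fun u hu => ?_) hmaps
    obtain ⟨t, ht, rfl⟩ := hu
    exact (Real.continuousAt_rpow_const _ _
      (Or.inl (Real.rpow_pos_of_pos (hpos t ht) α).ne')).continuousWithinAt
  rw [← intervalIntegral.integral_const_mul, ← integral_comp_mul_deriv'
    (fun t ht => Real.hasDerivAt_rpow_const (Or.inl (hpos t ht).ne')) ?_ hcont]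
  · refine integral_congr fun t ht => ?_
    simp only [Function.comp_apply, Real.rpow_rpow_inv (hpos t ht).le hα]
    ring
  · exact continuousOn_const.mul fun t ht =>
      (Real.continuousAt_rpow_const _ _ (Or.inl (hpos t ht).ne')).continuousWithinAt

theorem convexOn_comp_rpow_inv_of_monotoneOn_condD {α a b : ℝ} {f : ℝ → ℝ} (hα : 0 < α)
    (ha : 0 < a) (hab : a ≤ b) (hf : ∀ x ∈ Icc a b, DifferentiableAt ℝ f x)
    (hmono : MonotoneOn (condD α f) (Icc a b)) :
    ConvexOn ℝ (Icc (a ^ α) (b ^ α)) (fun u => f (u ^ α⁻¹)) := by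
  have hmem : ∀ u ∈ Icc (a ^ α) (b ^ α), u ^ α⁻¹ ∈ Icc a b := fun u hu =>
    rpow_inv_mem_Icc_of_mem_Icc_rpow hα ha.le (ha.le.trans hab) hu
  have hpos : ∀ u ∈ Icc (a ^ α) (b ^ α), 0 < u := fun u hu =>
    (Real.rpow_pos_of_pos ha α).trans_le hu.1
  refine convexOn_Icc_of_hasDerivAt_of_monotoneOn
    (fun u hu => hasDerivAt_comp_rpow_inv hα.ne' (hpos u hu) (hf _ (hmem u hu))) ?_
  intro u hu v hv huv
  exact mul_le_mul_of_nonneg_left (hmono (hmem u hu) (hmem v hv)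
    (Real.rpow_le_rpow (hpos u hu).le huv (inv_nonneg.2 hα.le))) (inv_nonneg.2 hα.le)

theorem div_mul_integral_le_of_monotoneOn_condD {α a b : ℝ} {f : ℝ → ℝ} (hα : 0 < α)
    (ha : 0 < a) (hab : a < b) (hf : ∀ x ∈ Icc a b, DifferentiableAt ℝ f x)
    (hmono : MonotoneOn (condD α f) (Icc a b)) :
    (α / (b ^ α - a ^ α)) * (∫ t in a..b, f t * t ^ (α - 1)) ≤ (f a + f b) / 2 := by
  have hAB : a ^ α < b ^ α := Real.rpow_lt_rpow ha.le hab hα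
  have hfc : ContinuousOn f (Icc a b) := fun x hx => (hf x hx).continuousAt.continuousWithinAt
  have hconv := convexOn_comp_rpow_inv_of_monotoneOn_condD hα ha hab.le hf hmono
  have hgc : ContinuousOn (fun u => f (u ^ α⁻¹)) (uIcc (a ^ α) (b ^ α)) := by
    rw [uIcc_of_le hAB.le]
    exact hfc.comp (Real.continuous_rpow_const (inv_nonneg.2 hα.le)).continuousOn fun u hu =>
      rpow_inv_mem_Icc_of_mem_Icc_rpow hα ha.le (ha.trans hab).le hu
  have hchange := integral_mul_rpow_sub_one_eq hα.ne'
    (fun t ht => ha.trans_le (by rw [uIcc_of_le hab.le] at ht; exact ht.1))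
    (by rwa [uIcc_of_le hab.le])
  have hchord := hconv.integral_le_mul_add_div_two hgc.intervalIntegrable hAB.le
  simp only [Real.rpow_rpow_inv ha.le hα.ne', Real.rpow_rpow_inv (ha.trans hab).le hα.ne'] at hchord
  rw [div_mul_eq_mul_div, div_le_iff₀ (sub_pos.2 hAB)]
  linarith

theorem condD_neg (α : ℝ) (f : ℝ → ℝ) : condD α (-f) = -condD α f := by
  funext t
  simp only [condD, deriv.neg', Pi.neg_apply, mul_neg]

theorem hermite_hadamard_II_general (α a b : ℝ) (hα : 0 < α ∧ α ≤ 1)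
    (ha : 0 < a) (hab : a < b) (f : ℝ → ℝ)
    (hdiff : ∀ x ∈ Icc a b, DifferentiableAt ℝ f x) :
    (MonotoneOn (condD α f) (Icc a b) →
      (α / (b ^ α - a ^ α)) * (∫ t in a..b, f t * t ^ (α - 1)) ≤ (f a + f b) / 2) ∧
    (AntitoneOn (condD α f) (Icc a b) →
      (f a + f b) / 2 ≤ (α / (b ^ α - a ^ α)) * ∫ t in a..b, f t * t ^ (α - 1)) := by
  refine ⟨div_mul_integral_le_of_monotoneOn_condD hα.1 ha hab hdiff, fun hanti => ?_⟩
  have hneg := div_mul_integral_le_of_monotoneOn_condD hα.1 ha hab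
    (fun x hx => (hdiff x hx).neg) (by rw [condD_neg]; exact hanti.neg)
  simp only [Pi.neg_apply, neg_mul, intervalIntegral.integral_neg] at hneg
  linarith

/-- Hermite–Hadamard inequality II for conformable derivatives. -/
theorem hermite_hadamard_II (α a b : ℝ) (hα : 0 < α ∧ α ≤ 1)
    (ha : 0 < a) (hab : a < b) (f : ℝ → ℝ)
    (hdiff : ∀ x ∈ Icc a b, DifferentiableAt ℝ f x)
    (hint : IntervalIntegrable (fun t => f t * t ^ (α - 1)) volume a b) :
    (MonotoneOn (condD α f) (Icc a b) →
      (α / (b ^ α - a ^ α)) * (∫ t in a..b, f t * t ^ (α - 1)) ≤ (f a + f b) / 2) ∧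
    (AntitoneOn (condD α f) (Icc a b) →
      (f a + f b) / 2 ≤ (α / (b ^ α - a ^ α)) * ∫ t in a..b, f t * t ^ (α - 1)) :=
  hermite_hadamard_II_general α a b hα ha hab f hdiff
end
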